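/- Let X be a compact metric space, let A be a unital simple C*-algebra, and let α be a *-automorphism of C(X,A). If C(X,A) is α-simple, then there exist a minimal homeomorphism σ : X → X and a strongly continuous map β from X to the *-automorphisms of A such that α(f)(x) = β_{σ^{-1}(x)}(f(σ^{-1}(x))) for every f ∈ C(X,A) and every x ∈ X. -/

import Mathlib

/-!
Since `A` is simple, its centre is `ℂ`: for a central `z` and `c` in its spectrum, the closed
ideal generated by the central non-unit `c - z` is proper (the units are open), hence zero.
So the centre of `C(X, A)` is `C(X, ℂ)`, which `α` preserves, and by Gelfand duality `α` acts
on it as `g ↦ g ∘ s` for a homeomorphism `s` of `X`. Multiplying by scalar cut-off functions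
shows that `α f x` depends only on `f (s x)`; this gives the fibre automorphisms `β`. Finally,
for closed `Z` with `s Z ⊆ Z` the ideal of functions vanishing on `Z` is `α`-invariant, so it
is `⊥` or `⊤`, that is, `Z = univ` or `Z = ∅`.
-/

instance Ideal.isTwoSided_closure {R : Type*} [Ring R] [TopologicalSpace R] [IsTopologicalRing R]
    (I : Ideal R) [I.IsTwoSided] : I.closure.IsTwoSided :=
  ⟨fun b ha => map_mem_closure (f := (· * b)) (continuous_mul_const b) ha
    fun _ hx => I.mul_mem_right b hx⟩

lemma Ideal.isTwoSided_span_singleton_of_mem_center {R : Type*} [Ring R] {w : R}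
    (hw : w ∈ Set.center R) : (Ideal.span {w}).IsTwoSided :=
  ⟨fun b ha => by
    obtain ⟨a, rfl⟩ := Ideal.mem_span_singleton'.1 ha
    exact Ideal.mem_span_singleton'.2 ⟨a * b, by
      rw [mul_assoc, mul_assoc, (Semigroup.mem_center_iff.1 hw b).symm]⟩⟩

lemma isUnit_of_mem_center_of_mul_eq_one {R : Type*} [Monoid R] {w a : R}
    (hw : w ∈ Set.center R) (h : a * w = 1) : IsUnit w :=
  ⟨⟨w, a, by rw [← Semigroup.mem_center_iff.1 hw a, h], h⟩, rfl⟩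

theorem Algebra.isCentral_of_forall_isClosed_twoSidedIdeal {A : Type*} [NormedRing A]
    [NormedAlgebra ℂ A] [CompleteSpace A] [Nontrivial A]
    (hA : ∀ I : TwoSidedIdeal A, IsClosed (I : Set A) → I = ⊥ ∨ I = ⊤) :
    Algebra.IsCentral ℂ A := by
  refine ⟨fun z hz => ?_⟩
  obtain ⟨c, hc⟩ := spectrum.nonempty z
  rw [spectrum.mem_iff] at hc
  set w := algebraMap ℂ A c - z
  have hw : w ∈ Set.center A :=
    sub_mem (Subalgebra.algebraMap_mem (Subalgebra.center ℂ A) c) hz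
  have := Ideal.isTwoSided_span_singleton_of_mem_center hw
  set K := (Ideal.span {w}).closure
  rcases hA K.toTwoSided (by rw [Ideal.coe_toTwoSided, Ideal.coe_closure]; exact isClosed_closure)
    with hK | hK
  · have hw0 : w ∈ K.toTwoSided :=
      Ideal.mem_toTwoSided.2 (subset_closure (Ideal.mem_span_singleton_self w))
    rw [hK, TwoSidedIdeal.mem_bot, sub_eq_zero] at hw0
    exact ⟨c, hw0⟩
  · have hspan : Ideal.span {w} = ⊤ := by
      by_contra hspan
      refine Ideal.closure_ne_top _ hspan ?_
      change K = ⊤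
      rw [← Ideal.asIdeal_toTwoSided K, hK, TwoSidedIdeal.top_asIdeal]
    obtain ⟨a, ha⟩ := Ideal.mem_span_singleton'.1 (hspan ▸ Submodule.mem_top : (1 : A) ∈ _)
    exact absurd (isUnit_of_mem_center_of_mul_eq_one hw ha) hc

theorem AlgEquiv.exists_comp_eq_comp_of_range_eq_center {R B C : Type*} [CommSemiring R]
    [Semiring B] [Semiring C] [Algebra R B] [Algebra R C] (ι : B →ₐ[R] C)
    (hι : Function.Injective ι) (hrange : Set.range ι = Set.center C) (α : C ≃ₐ[R] C) :
    ∃ T : B ≃ₐ[R] B, ∀ b, α (ι b) = ι (T b) := by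
  have lift (α : C ≃ₐ[R] C) : ∃ T : B →ₐ[R] B, ∀ b, α (ι b) = ι (T b) := by
    have hmem (b : B) : α (ι b) ∈ ι.range := by
      rw [← SetLike.mem_coe, AlgHom.coe_range, hrange]
      exact MulEquivClass.apply_mem_center α (hrange ▸ Set.mem_range_self b)
    refine ⟨(AlgEquiv.ofInjective ι hι).symm.toAlgHom.comp
      ((α.toAlgHom.comp ι).codRestrict _ hmem), fun b => ?_⟩
    exact congr(Subtype.val $((AlgEquiv.ofInjective ι hι).apply_symm_apply ⟨_, hmem b⟩)).symm
  obtain ⟨T, hT⟩ := lift α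
  obtain ⟨T', hT'⟩ := lift α.symm
  have comp_eq_id {T T' : B →ₐ[R] B} {α : C ≃ₐ[R] C} (hT : ∀ b, α (ι b) = ι (T b))
      (hT' : ∀ b, α.symm (ι b) = ι (T' b)) : T.comp T' = AlgHom.id R B :=
    AlgHom.ext fun b => hι <| by simp [← hT, ← hT']
  exact ⟨AlgEquiv.ofAlgHom T T' (comp_eq_id hT hT')
    (comp_eq_id (α := α.symm) hT' (by simpa using hT)),
    hT⟩

open WeakDual in
theorem ContinuousMap.exists_apply_eq_comp_of_algHomClass {X Y : Type*} [TopologicalSpace X]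
    [CompactSpace X] [T2Space X] [TopologicalSpace Y] {F : Type*} [FunLike F C(X, ℂ) C(Y, ℂ)]
    [AlgHomClass F ℂ C(X, ℂ) C(Y, ℂ)] (T : F) :
    ∃ s : C(Y, X), ∀ g, T g = g.comp s := by
  let χ : Y → characterSpace ℂ C(X, ℂ) := fun y =>
    CharacterSpace.equivAlgHom.symm
      ((ContinuousMap.evalAlgHom ℂ ℂ y).comp (AlgHomClass.toAlgHom T))
  have hχ : Continuous χ :=
    (continuous_of_continuous_eval fun g => (T g).continuous).subtype_mk _
  refine ⟨⟨(CharacterSpace.homeoEval X ℂ).symm ∘ χ, by fun_prop⟩, fun g => ?_⟩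
  ext y
  exact congrArg (fun φ : characterSpace ℂ C(X, ℂ) => φ g)
    ((CharacterSpace.homeoEval X ℂ).apply_symm_apply (χ y)).symm

theorem ContinuousMap.eq_of_forall_comp_eq {Y X : Type*} [TopologicalSpace Y]
    [TopologicalSpace X] [CompactSpace X] [T2Space X] {t₁ t₂ : C(Y, X)}
    (h : ∀ g : C(X, ℂ), g.comp t₁ = g.comp t₂) : t₁ = t₂ :=
  ext fun y => (WeakDual.CharacterSpace.continuousMapEval_bijective X ℂ).1 <| by
    ext g; simpa using congr($(h g) y)

theorem AlgEquiv.exists_homeomorph_apply_eq_comp {X Y : Type*} [TopologicalSpace X]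
    [CompactSpace X] [T2Space X] [TopologicalSpace Y] [CompactSpace Y] [T2Space Y]
    (T : C(X, ℂ) ≃ₐ[ℂ] C(Y, ℂ)) : ∃ s : Y ≃ₜ X, ∀ g, T g = g.comp s := by
  obtain ⟨s, hs⟩ := ContinuousMap.exists_apply_eq_comp_of_algHomClass T
  obtain ⟨s', hs'⟩ := ContinuousMap.exists_apply_eq_comp_of_algHomClass T.symm
  have hs's : s'.comp s = .id Y := ContinuousMap.eq_of_forall_comp_eq fun g => by
    rw [← ContinuousMap.comp_assoc, ← hs', ← hs, AlgEquiv.apply_symm_apply, g.comp_id]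
  have hss' : s.comp s' = .id X := ContinuousMap.eq_of_forall_comp_eq fun g => by
    rw [← ContinuousMap.comp_assoc, ← hs, ← hs', AlgEquiv.symm_apply_apply, g.comp_id]
  exact ⟨⟨⟨s, s', fun y => congr($hs's y), fun x => congr($hss' x)⟩, s.continuous,
    s'.continuous⟩, hs⟩

namespace ContinuousMap

section vanishing

variable {X R : Type*} [TopologicalSpace X] [Ring R] [TopologicalSpace R] [IsTopologicalRing R]

variable (R) in
def vanishingTwoSidedIdeal (Z : Set X) : TwoSidedIdeal C(X, R) :=
  .mk' {f | ∀ z ∈ Z, f z = 0} (fun _ _ => rfl) (fun hf hg z hz => by simp [hf z hz, hg z hz])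
    (fun hf z hz => by simp [hf z hz]) (fun hg z hz => by simp [hg z hz])
    (fun hf z hz => by simp [hf z hz])

lemma mem_vanishingTwoSidedIdeal {Z : Set X} {f : C(X, R)} :
    f ∈ vanishingTwoSidedIdeal R Z ↔ ∀ z ∈ Z, f z = 0 :=
  TwoSidedIdeal.mem_mk' ..

lemma isClosed_vanishingTwoSidedIdeal [T1Space R] (Z : Set X) :
    IsClosed (vanishingTwoSidedIdeal R Z : Set C(X, R)) := by
  have : (vanishingTwoSidedIdeal R Z : Set C(X, R)) = ⋂ z ∈ Z, {f | f z = 0} := by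
    ext f
    simp [mem_vanishingTwoSidedIdeal]
  rw [this]
  exact isClosed_biInter fun z _ => isClosed_singleton.preimage (continuous_eval_const z)

end vanishing

section scalar

variable (X A : Type*) [TopologicalSpace X] [CStarAlgebra A]

noncomputable def scalarStarAlgHom : C(X, ℂ) →⋆ₐ[ℂ] C(X, A) :=
  compStarAlgHom X (StarAlgHom.ofId ℂ A) (continuous_algebraMap ℂ A)

variable {X A}

@[simp]
lemma scalarStarAlgHom_apply (g : C(X, ℂ)) (x : X) :
    scalarStarAlgHom X A g x = algebraMap ℂ A (g x) :=
  rfl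

lemma scalarStarAlgHom_injective [Nontrivial A] :
    Function.Injective (scalarStarAlgHom X A) := fun g h hgh =>
  ext fun x => (algebraMap ℂ A).injective (by simpa using congr($hgh x))

lemma range_scalarStarAlgHom_eq_center [Nontrivial A] [Algebra.IsCentral ℂ A] :
    Set.range (scalarStarAlgHom X A) = Set.center C(X, A) := by
  refine Set.Subset.antisymm ?_ fun z hz => ?_
  · rintro _ ⟨g, rfl⟩
    exact Semigroup.mem_center_iff.2 fun f => ext fun x => by simp [Algebra.commutes]
  · have hzx (x : X) : z x ∈ Subalgebra.center ℂ A := Semigroup.mem_center_iff.2 fun a => by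
      simpa using congr($(Semigroup.mem_center_iff.1 hz (const X a)) x)
    choose c hc using fun x => (Algebra.IsCentral.mem_center_iff ℂ).1 (hzx x)
    have hcont : Continuous c := (algebraMap_isometry ℂ A).isEmbedding.continuous_iff.2 <| by
      simpa only [Function.comp_def, ← hc] using z.continuous
    exact ⟨⟨c, hcont⟩, ext fun x => (hc x).symm⟩

variable [CompactSpace X]

lemma exists_norm_sub_scalarStarAlgHom_mul_le (f : C(X, A)) {p : X} (hf : f p = 0) {ε : ℝ}
    (hε : 0 < ε) :
    ∃ g : C(X, ℂ), g p = 0 ∧ ‖f - scalarStarAlgHom X A g * f‖ ≤ ε := by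
  let g : C(X, ℂ) := ⟨fun y => ((min 1 (‖f y‖ / ε) : ℝ) : ℂ), by fun_prop⟩
  refine ⟨g, by simp [g, hf], (norm_le _ hε.le).2 fun y => ?_⟩
  have hy : (f - scalarStarAlgHom X A g * f) y = ((1 - min 1 (‖f y‖ / ε) : ℝ) : ℂ) • f y := by
    simp [g, Algebra.smul_def, sub_mul]
  rw [hy, norm_smul, Complex.norm_real, Real.norm_eq_abs]
  rcases le_total ε ‖f y‖ with hle | hle
  · rw [min_eq_left ((one_le_div hε).2 hle)]
    simpa using hε.le
  · have h0 : 0 ≤ 1 - min 1 (‖f y‖ / ε) := sub_nonneg.2 (min_le_left _ _)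
    have h1 : 1 - min 1 (‖f y‖ / ε) ≤ 1 :=
      sub_le_self _ (le_min zero_le_one (div_nonneg (norm_nonneg _) hε.le))
    rw [abs_of_nonneg h0]
    nlinarith [norm_nonneg (f y)]

lemma apply_eq_apply_const_of_map_scalarStarAlgHom {F : Type*} [FunLike F C(X, A) C(X, A)]
    [AlgHomClass F ℂ C(X, A) C(X, A)] [StarHomClass F C(X, A) C(X, A)] (α : F) (s : C(X, X))
    (hα : ∀ g, α (scalarStarAlgHom X A g) = scalarStarAlgHom X A (g.comp s))
    (f : C(X, A)) (x : X) : α f x = α (const X (f (s x))) x := by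
  suffices h : ∀ f : C(X, A), f (s x) = 0 → α f x = 0 by
    simpa [sub_eq_zero] using h (f - const X (f (s x))) (by simp)
  intro f hf
  refine norm_le_zero_iff.1 (le_of_forall_pos_le_add fun ε hε => ?_)
  obtain ⟨g, hg, hfg⟩ := exists_norm_sub_scalarStarAlgHom_mul_le f hf hε
  have hvanish : α (scalarStarAlgHom X A g * f) x = 0 := by simp [hα, hg]
  calc
    ‖α f x‖ = ‖α (f - scalarStarAlgHom X A g * f) x‖ := by
      rw [map_sub, sub_apply, hvanish, sub_zero]
    _ ≤ ‖α (f - scalarStarAlgHom X A g * f)‖ := norm_coe_le_norm _ _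
    _ ≤ ‖f - scalarStarAlgHom X A g * f‖ := NonUnitalStarAlgHom.norm_apply_le α _
    _ ≤ 0 + ε := by rwa [zero_add]

end scalar

end ContinuousMap

namespace StarAlgEquiv

open ContinuousMap

variable {X A : Type*} [TopologicalSpace X] [Ring A] [TopologicalSpace A] [IsTopologicalRing A]
  [StarRing A] [ContinuousStar A] [Algebra ℂ A]

theorem exists_fibrewise_of_apply_eq_apply_const (α : C(X, A) ≃⋆ₐ[ℂ] C(X, A)) (s : X ≃ₜ X)
    (h : ∀ f x, α f x = α (const X (f (s x))) x)
    (h' : ∀ f x, α.symm f x = α.symm (const X (f (s.symm x))) x) :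
    ∃ β : X → (A ≃⋆ₐ[ℂ] A), (∀ a, Continuous fun y => β y a) ∧
      ∀ f x, α f x = β (s x) (f (s x)) := by
  let β (y : X) : A ≃⋆ₐ[ℂ] A :=
    { toFun a := α (const X a) (s.symm y)
      invFun a := α.symm (const X a) y
      left_inv a := by simpa using (h' (α (const X a)) y).symm
      right_inv a := by simpa using (h (α.symm (const X a)) (s.symm y)).symm
      map_mul' a b := congr($(map_mul α (const X a) (const X b)) (s.symm y))
      map_add' a b := congr($(map_add α (const X a) (const X b)) (s.symm y))
      map_smul' c a := congr($(map_smul α c (const X a)) (s.symm y))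
      map_star' a := congr($(map_star α (const X a)) (s.symm y)) }
  refine ⟨β, fun a => (α (const X a)).continuous.comp s.symm.continuous, fun f x => ?_⟩
  simpa [β] using h f x

theorem eq_empty_or_eq_univ_of_mapsTo [NormalSpace X] [T1Space X] [T1Space A]
    [ContinuousSMul ℂ A] [Nontrivial A] (α : C(X, A) ≃⋆ₐ[ℂ] C(X, A)) (s : X → X)
    (h : ∀ f x, α f x = α (const X (f (s x))) x)
    (hα : ∀ I : TwoSidedIdeal C(X, A), IsClosed (I : Set C(X, A)) →
      (∀ f ∈ I, α f ∈ I) → I = ⊥ ∨ I = ⊤)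
    {Z : Set X} (hZ : IsClosed Z) (hsZ : Set.MapsTo s Z Z) : Z = ∅ ∨ Z = Set.univ := by
  have hinv (f) (hf : f ∈ vanishingTwoSidedIdeal A Z) : α f ∈ vanishingTwoSidedIdeal A Z :=
    mem_vanishingTwoSidedIdeal.2 fun z hz => by
      rw [h, mem_vanishingTwoSidedIdeal.1 hf (s z) (hsZ hz), const_zero, map_zero,
        ContinuousMap.zero_apply]
  rcases hα _ (isClosed_vanishingTwoSidedIdeal Z) hinv with hbot | htop
  · refine Or.inr (Set.eq_univ_of_forall fun x => by_contra fun hx => ?_)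
    obtain ⟨u, hu0, hu1, -⟩ := exists_continuous_zero_one_of_isClosed hZ isClosed_singleton
      (Set.disjoint_singleton_right.2 hx)
    let f : C(X, A) := ⟨fun y => (u y : ℂ) • (1 : A), by fun_prop⟩
    have hf : f ∈ vanishingTwoSidedIdeal A Z :=
      mem_vanishingTwoSidedIdeal.2 fun z hz => by simp [f, hu0 hz]
    rw [hbot, TwoSidedIdeal.mem_bot] at hf
    simpa [f, hu1 (Set.mem_singleton x)] using congr($hf x)
  · refine Or.inl (Set.eq_empty_of_forall_notMem fun z hz => one_ne_zero (α := A) ?_)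
    exact (mem_vanishingTwoSidedIdeal (f := 1)).1 (htop ▸ TwoSidedIdeal.mem_top _) z hz

section CStarAlgebra

variable {X A : Type*} [TopologicalSpace X] [CStarAlgebra A]

theorem exists_homeomorph_map_scalarStarAlgHom [CompactSpace X] [T2Space X] [Nontrivial A]
    [Algebra.IsCentral ℂ A]
    (α : C(X, A) ≃⋆ₐ[ℂ] C(X, A)) :
    ∃ s : X ≃ₜ X, ∀ g, α (scalarStarAlgHom X A g) =
      scalarStarAlgHom X A (g.comp s) := by
  obtain ⟨T, hT⟩ := AlgEquiv.exists_comp_eq_comp_of_range_eq_center _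
    scalarStarAlgHom_injective range_scalarStarAlgHom_eq_center
    α.toAlgEquiv
  obtain ⟨s, hs⟩ := T.exists_homeomorph_apply_eq_comp
  exact ⟨s, fun g => by simpa [hs] using hT g⟩

end CStarAlgebra

end StarAlgEquiv

/-- Let `X` be a compact metric space, `A` a unital simple C*-algebra and
`α` a *-automorphism of `C(X,A)`.  If `C(X,A)` is `α`-simple, then there exist a
minimal homeomorphism `σ : X → X` and a strongly continuous map `β` from `X` to the
*-automorphisms of `A` such that `α f x = β_{σ⁻¹ x} (f (σ⁻¹ x))` for all `f`, `x`. -/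
theorem alpha_simple_gives_minimal_homeomorphism
    (X : Type*) [MetricSpace X] [CompactSpace X]
    (A : Type*) [NormedRing A] [StarRing A] [CStarRing A] [NormedAlgebra ℂ A]
    [CompleteSpace A] [StarModule ℂ A] [Nontrivial A]
    (hA : ∀ I : TwoSidedIdeal A, IsClosed (I : Set A) → I = ⊥ ∨ I = ⊤)
    (α : C(X, A) ≃⋆ₐ[ℂ] C(X, A))
    (hαsimple : ∀ I : TwoSidedIdeal C(X, A), IsClosed (I : Set C(X, A)) →
      (∀ f ∈ I, α f ∈ I) → I = ⊥ ∨ I = ⊤) :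
    ∃ σ : X ≃ₜ X,
      (∀ Z : Set X, IsClosed Z → ⇑σ '' Z = Z → Z = ∅ ∨ Z = Set.univ) ∧
      ∃ β : X → (A ≃⋆ₐ[ℂ] A),
        (∀ a : A, Continuous fun x : X => β x a) ∧
        (∀ (f : C(X, A)) (x : X), α f x = β (σ.symm x) (f (σ.symm x))) := by
  let _ : CStarAlgebra A := {}
  have := Algebra.isCentral_of_forall_isClosed_twoSidedIdeal hA
  obtain ⟨s, hs⟩ := α.exists_homeomorph_map_scalarStarAlgHom
  have hs' (g : C(X, ℂ)) : α.symm (ContinuousMap.scalarStarAlgHom X A g) =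
      ContinuousMap.scalarStarAlgHom X A (g.comp s.symm) := by
    rw [StarAlgEquiv.symm_apply_eq, hs]
    congr 1
    ext x
    simp
  have hloc := ContinuousMap.apply_eq_apply_const_of_map_scalarStarAlgHom α s hs
  obtain ⟨β, hβ, hαβ⟩ := α.exists_fibrewise_of_apply_eq_apply_const s hloc
    (ContinuousMap.apply_eq_apply_const_of_map_scalarStarAlgHom α.symm s.symm hs')
  refine ⟨s.symm, fun Z hZ hsZ => α.eq_empty_or_eq_univ_of_mapsTo s hloc hαsimple hZ
    fun z hz => ?_, β, hβ, fun f x => by simpa using hαβ f x⟩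
  rw [← hsZ, Homeomorph.image_symm] at hz
  exact hz
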